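/- Fix an integer n ≥ 3. If R > 1 satisfies R^(2i+n) < (2i+n-1)R^2 + (i+n-1)(2i+n-1)/(i+1) for an integer i ≥ 1, then R < exp(2·log(2i+n)/(2i+n-2)). -/

import Mathlib

/-!
Write `a = 2i + n`. The constant term satisfies `(a - 1) + (i+n-1)(a-1)/(i+1) = a(a-1)/(i+1) ≤ a²`,
so, as `R² > 1`, the hypothesis gives `R^a < a² R²`, i.e. `R^(a-2) < a²`; taking logarithms gives
the bound.
-/

open Real

theorem lt_exp_log_div_of_pow_lt {R b : ℝ} {k : ℕ} (hR : 0 < R) (hk : 0 < k) (h : R ^ k < b) :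
    R < exp (log b / k) := by
  have hlog : k * log R < log b := by
    simpa only [log_pow] using log_lt_log (pow_pos hR k) h
  calc R = exp (log R) := (exp_log hR).symm
    _ < exp (log b / k) := exp_lt_exp.mpr <| by
      rw [lt_div_iff₀ (by exact_mod_cast hk)]
      linarith

theorem pow_lt_of_pow_add_two_lt {R A B C : ℝ} {m : ℕ} (hR : 1 ≤ R) (hC : 0 ≤ C)
    (hABC : A + C ≤ B) (h : R ^ (m + 2) < A * R ^ 2 + C) : R ^ m < B := by
  have hR2 : 1 ≤ R ^ 2 := one_le_pow₀ hR
  have : R ^ m * R ^ 2 < B * R ^ 2 :=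
    calc R ^ m * R ^ 2 = R ^ (m + 2) := (pow_add R m 2).symm
      _ < A * R ^ 2 + C := h
      _ ≤ A * R ^ 2 + C * R ^ 2 := by gcongr; exact le_mul_of_one_le_right hC hR2
      _ ≤ B * R ^ 2 := by rw [← add_mul]; gcongr
  exact lt_of_mul_lt_mul_right this (by positivity)

theorem sub_one_add_mul_div_le_sq (i n : ℕ) :
    ((2 * i : ℝ) + n - 1) + ((i : ℝ) + n - 1) * ((2 * i : ℝ) + n - 1) / ((i : ℝ) + 1)
      ≤ ((2 * i : ℝ) + n) ^ 2 := by
  have hi : (0 : ℝ) ≤ i := i.cast_nonneg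
  have hn : (0 : ℝ) ≤ n := n.cast_nonneg
  rw [← sub_nonneg]
  have key : ((2 * i : ℝ) + n) ^ 2 - (((2 * i : ℝ) + n - 1)
      + ((i : ℝ) + n - 1) * ((2 * i : ℝ) + n - 1) / ((i : ℝ) + 1))
      = ((2 * i : ℝ) + n) * (i * (2 * i + n) + 1) / (i + 1) := by
    field_simp
    ring
  rw [key]
  positivity

theorem stmt_13_general (n i : ℕ) (hn : 3 ≤ n) (R : ℝ) (hR : 1 < R)
    (h : R ^ (2 * i + n) <
      ((2 * i : ℝ) + n - 1) * R ^ 2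
        + ((i : ℝ) + n - 1) * ((2 * i : ℝ) + n - 1) / ((i : ℝ) + 1)) :
    R < Real.exp (2 * Real.log ((2 * i : ℝ) + n) / ((2 * i : ℝ) + n - 2)) := by
  obtain ⟨m, hm⟩ : ∃ m, 2 * i + n = m + 2 := ⟨2 * i + n - 2, by omega⟩
  have hm_cast : ((2 * i : ℝ) + n - 2) = m := by
    rw [sub_eq_iff_eq_add]; exact_mod_cast hm
  have hC : 0 ≤ ((i : ℝ) + n - 1) * ((2 * i : ℝ) + n - 1) / ((i : ℝ) + 1) := by
    have : (3 : ℝ) ≤ n := by exact_mod_cast hn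
    have : (0 : ℝ) ≤ i := i.cast_nonneg
    apply div_nonneg (mul_nonneg _ _) <;> linarith
  rw [hm] at h
  have hpow := pow_lt_of_pow_add_two_lt hR.le hC (sub_one_add_mul_div_le_sq i n) h
  have hlog_sq : 2 * log ((2 * i : ℝ) + n) = log (((2 * i : ℝ) + n) ^ 2) := by simp [log_pow]
  rw [hm_cast, hlog_sq]
  exact lt_exp_log_div_of_pow_lt (by linarith) (by omega) hpow

theorem stmt_13 (n i : ℕ) (hn : 3 ≤ n) (hi : 1 ≤ i) (R : ℝ) (hR : 1 < R)
    (h : R ^ (2 * i + n) <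
      ((2 * i : ℝ) + n - 1) * R ^ 2
        + ((i : ℝ) + n - 1) * ((2 * i : ℝ) + n - 1) / ((i : ℝ) + 1)) :
    R < Real.exp (2 * Real.log ((2 * i : ℝ) + n) / ((2 * i : ℝ) + n - 2)) :=
  stmt_13_general n i hn R hR h
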